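/- In a nonzero Euclidean quasicomposition algebra (A, ∘, σ, h), for each nonzero x the operator P(x) = h(x,x)⁻¹·L(x^σ)L(x) is an h-orthogonal projection: P(x)² = P(x) and P(x) is self-adjoint with respect to h. -/
import Mathlib


/-- In a nonzero Euclidean quasicomposition algebra, for each nonzero `x`
the operator `P(x) = h(x,x)⁻¹·L(x^σ)L(x)` is an `h`-orthogonal projection. -/
theorem quasicomposition_projection
    {A : Type*} [AddCommGroup A] [Module ℝ A]
    (mul : A →ₗ[ℝ] A →ₗ[ℝ] A)
    (σ : A →ₗ[ℝ] A)
    (hσinv : ∀ x : A, σ (σ x) = x)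
    (hσmul : ∀ x y : A, σ (mul x y) = mul (σ y) (σ x))
    (h : A →ₗ[ℝ] A →ₗ[ℝ] ℝ)
    (hsymm : ∀ x y : A, h x y = h y x)
    (hpos : ∀ x : A, x ≠ 0 → 0 < h x x)
    (hσorth : ∀ x y : A, h (σ x) (σ y) = h x y)
    (hinv : ∀ x y z : A, h (mul x y) z = h x (mul z (σ y)))
    (hqc : ∀ x y : A, mul x (mul (σ x) (mul x y)) = h x x • mul x y) :
    ∀ x : A, x ≠ 0 →
      (((h x x)⁻¹ • (mul (σ x) ∘ₗ mul x)) ∘ₗ ((h x x)⁻¹ • (mul (σ x) ∘ₗ mul x))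
          = (h x x)⁻¹ • (mul (σ x) ∘ₗ mul x)) ∧
      (∀ y z : A, h (((h x x)⁻¹ • (mul (σ x) ∘ₗ mul x)) y) z
          = h y (((h x x)⁻¹ • (mul (σ x) ∘ₗ mul x)) z)) := by
  intro x hx
  set c := h x x with hc
  have hcne : c ≠ 0 := ne_of_gt (hpos x hx)
  have key : ∀ y z : A, h (mul (σ x) (mul x y)) z = h (mul x y) (mul x z) := by
    intro y z
    calc h (mul (σ x) (mul x y)) z
        = h (σ x) (mul z (σ (mul x y))) := hinv _ _ _
      _ = h (σ x) (σ (σ (mul z (σ (mul x y))))) := by rw [hσinv]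
      _ = h x (σ (mul z (σ (mul x y)))) := hσorth _ _
      _ = h x (mul (σ (σ (mul x y))) (σ z)) := by rw [hσmul]
      _ = h x (mul (mul x y) (σ z)) := by rw [hσinv]
      _ = h (mul x z) (mul x y) := (hinv x z (mul x y)).symm
      _ = h (mul x y) (mul x z) := hsymm _ _
  constructor
  · apply LinearMap.ext
    intro y
    simp only [LinearMap.comp_apply, LinearMap.smul_apply, map_smul]
    have e1 : mul (σ x) (mul x (mul (σ x) (mul x y)))
        = c • mul (σ x) (mul x y) := by
      have := congrArg (σ ∘ₗ mul x) (hqc x y)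
      -- alternative: apply L(σ x) directly
      have h2 := congrArg (mul (σ x)) (hqc x y)
      calc mul (σ x) (mul x (mul (σ x) (mul x y)))
          = mul (σ x) (c • mul x y) := by rw [hqc x y]
        _ = c • mul (σ x) (mul x y) := by simp [map_smul]
    rw [e1, smul_smul, smul_smul]
    congr 1
    field_simp
  · intro y z
    simp only [LinearMap.comp_apply, LinearMap.smul_apply, map_smul,
      LinearMap.map_smul₂, smul_eq_mul]
    rw [key y z]
    rw [show h y (mul (σ x) (mul x z)) = h (mul (σ x) (mul x z)) y from hsymm _ _,
      key z y, hsymm (mul x z) (mul x y)]
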